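/- arXiv:1008.0527 — 4 statements merged into one kernel-verified Lean document; each statement's English description precedes it below -/
import Mathlib

section
/- For integers n, i, j with i ≤ n-1 and any integer k, the sum over p ≥ j of (-1)^p · C(k - p, n-1) · C(n-1-i, p-j) equals (-1)^j · C(k - n + 1 - j + i, i). (Here C denotes the binomial coefficient, extended as a polynomial in its upper argument, and the sum is finite since C(n-1-i, p-j) vanishes for p > j + n - 1 - i.) -/
/-!
Substituting `p = j + q`, the left side is `(-1)^j` times the `d`-th backward difference,
`d = n - 1 - i`, of `x ↦ C(x, n - 1)` at `x = k - j`. By Pascal's rule each forward difference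
lowers the lower index of `C(x, ·)` by one, so this difference is `C(k - j - d, i)`.
-/

open Finset fwdDiff

section BinomialRing

variable {R : Type*} [Ring R] [BinomialRing R]

lemma fwdDiff_ringChoose (j : ℕ) :
    Δ_[1] (fun x : R ↦ Ring.choose x (j + 1)) = fun x ↦ Ring.choose x j := by
  ext x
  simp only [fwdDiff, Ring.choose_succ_succ, add_sub_cancel_right]

lemma fwdDiff_iter_ringChoose (j k : ℕ) :
    (Δ_[1])^[k] (fun x : R ↦ Ring.choose x (k + j)) = fun x ↦ Ring.choose x j := by
  induction k generalizing j with
  | zero => simp only [zero_add, Function.iterate_zero, id_eq]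
  | succ k ih =>
    simp only [Function.iterate_succ_apply', add_assoc, add_comm 1 j, ih, fwdDiff_ringChoose]

theorem sum_neg_one_pow_mul_choose_mul_ringChoose_sub (d j : ℕ) (x : R) :
    ∑ q ∈ range (d + 1), (-1) ^ q * (d.choose q : R) * Ring.choose (x - q) (d + j)
      = Ring.choose (x - d) j := by
  have h := congr_fun (fwdDiff_iter_ringChoose (R := R) j d) (x - d)
  rw [fwdDiff_iter_eq_sum_shift, ← sum_range_reflect] at h
  rw [← h]
  refine sum_congr rfl fun q hq => ?_
  have hqd : q ≤ d := Nat.lt_succ_iff.mp (mem_range.mp hq)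
  rw [Nat.add_sub_cancel, Nat.sub_sub_self hqd, Nat.choose_symm hqd, zsmul_eq_mul, nsmul_eq_mul,
    Nat.cast_sub hqd]
  push_cast
  rw [mul_one, sub_add_sub_cancel]

end BinomialRing

theorem stmt0_general (n i j : ℕ) (hi : i ≤ n - 1) (k : ℤ) :
    ∑ p ∈ Finset.Icc j (j + (n - 1 - i)),
      (-1 : ℤ) ^ p * Ring.choose (k - p) (n - 1) * (Nat.choose (n - 1 - i) (p - j) : ℤ)
    = (-1 : ℤ) ^ j * Ring.choose (k - n + 1 - j + i) i := by
  obtain _ | n := n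
  · simp_all
  obtain ⟨d, rfl⟩ : ∃ d, n = d + i := ⟨n - i, by omega⟩
  simp only [Nat.add_sub_cancel]
  rw [← Ico_add_one_right_eq_Icc, sum_Ico_eq_sum_range, show j + d + 1 - j = d + 1 by omega]
  calc ∑ q ∈ range (d + 1),
        (-1) ^ (j + q) * Ring.choose (k - ↑(j + q)) (d + i) * ↑(d.choose (j + q - j))
      = (-1) ^ j * ∑ q ∈ range (d + 1),
          (-1) ^ q * (d.choose q : ℤ) * Ring.choose (k - j - q) (d + i) := by
        rw [mul_sum]
        refine sum_congr rfl fun q _ => ?_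
        rw [Nat.add_sub_cancel_left, pow_add, Nat.cast_add, sub_add_eq_sub_sub]
        ring
    _ = (-1) ^ j * Ring.choose (k - ↑(d + i + 1) + 1 - ↑j + ↑i) i := by
        rw [sum_neg_one_pow_mul_choose_mul_ringChoose_sub]
        congr 2
        push_cast
        ring

/-- Chu–Vandermonde type identity:
for integers `n, i, j` with `i ≤ n-1` and any integer `k`,
`∑_{p ≥ j} (-1)^p C(k-p, n-1) C(n-1-i, p-j) = (-1)^j C(k-n+1-j+i, i)`,
where `C` with integer upper argument is the polynomial binomial coefficient
(`Ring.choose` on `ℤ`).  The sum is finite, supported on `j ≤ p ≤ j + (n-1-i)`. -/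
theorem stmt0 (n i j : ℕ) (hn : 1 ≤ n) (hi : i ≤ n - 1) (k : ℤ) :
    ∑ p ∈ Finset.Icc j (j + (n - 1 - i)),
      (-1 : ℤ) ^ p * Ring.choose (k - p) (n - 1) * (Nat.choose (n - 1 - i) (p - j) : ℤ)
    = (-1 : ℤ) ^ j * Ring.choose (k - n + 1 - j + i) i :=
  stmt0_general n i j hi k
end

section
/- For integers n, i, j with i ≤ n-2 and any integer k, the sum over p ≥ j of (-1)^p · C(k - p + 1, n-1) · C(n-2-i, p-j) equals (-1)^j · C(k - n + i - j + 3, i+1). -/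
/-!
The sum is, up to the sign `(-1)^j`, an `m`-fold alternating sum with `m = n - 2 - i`, i.e. an
`m`-th finite difference of `x ↦ C(x, n - 1)`. Since `C(x + 1, r + 1) - C(x, r + 1) = C(x, r)`,
taking `m` differences lowers the lower index from `n - 1 = m + (i + 1)` to `i + 1`.
-/

open Finset fwdDiff

namespace Ring

variable {R : Type*}

theorem fwdDiff_choose [Ring R] [BinomialRing R] (j : ℕ) :
    Δ_[1] (fun x : R ↦ choose x (j + 1)) = fun x ↦ choose x j := by
  ext x
  simp [fwdDiff, choose_succ_succ]

theorem fwdDiff_iter_choose [Ring R] [BinomialRing R] (j k : ℕ) :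
    (Δ_[1])^[k] (fun x : R ↦ choose x (k + j)) = fun x ↦ choose x j := by
  induction k generalizing j with
  | zero => simp
  | succ k ih => rw [Function.iterate_succ_apply', add_assoc, add_comm 1 j, ih, fwdDiff_choose]

theorem sum_range_neg_one_pow_mul_choose_mul_choose_sub [CommRing R] [BinomialRing R]
    (x : R) (m r : ℕ) :
    ∑ q ∈ range (m + 1), (-1) ^ q * (m.choose q : R) * choose (x - q) (m + r)
      = choose (x - m) r := by
  have h := fwdDiff_iter_eq_sum_shift 1 (fun y : R ↦ choose y (m + r)) m (x - m)
  rw [fwdDiff_iter_choose] at h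
  beta_reduce at h
  rw [h, ← sum_range_reflect]
  refine sum_congr rfl fun q hq ↦ ?_
  have hqm : q ≤ m := Nat.lt_succ_iff.mp (mem_range.mp hq)
  rw [Nat.add_sub_cancel, Nat.choose_symm hqm, Nat.cast_sub hqm, zsmul_eq_mul, nsmul_one,
    sub_sub_eq_add_sub, add_sub_right_comm]
  push_cast
  rfl

end Ring

/-- for integers `n, i, j` with `i ≤ n-2` and any integer `k`,
`∑_{p ≥ j} (-1)^p C(k-p+1, n-1) C(n-2-i, p-j) = (-1)^j C(k-n+i-j+3, i+1)`,
with `C` the polynomial binomial coefficient (`Ring.choose` on `ℤ`);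
the sum is supported on `j ≤ p ≤ j + (n-2-i)`. -/
theorem stmt1 (n i j : ℕ) (hn : 2 ≤ n) (hi : i ≤ n - 2) (k : ℤ) :
    ∑ p ∈ Finset.Icc j (j + (n - 2 - i)),
      (-1 : ℤ) ^ p * Ring.choose (k - p + 1) (n - 1) * (Nat.choose (n - 2 - i) (p - j) : ℤ)
    = (-1 : ℤ) ^ j * Ring.choose (k - n + i - j + 3) (i + 1) := by
  set m := n - 2 - i with hm
  have hn1 : n - 1 = m + (i + 1) := by omega
  have hkm : k - j + 1 - m = k - n + i - j + 3 := by
    push_cast [hm, Nat.cast_sub hi, Nat.cast_sub hn]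
    ring
  rw [← Ico_add_one_right_eq_Icc, sum_Ico_eq_sum_range, show j + m + 1 - j = m + 1 by omega,
    ← hkm, ← Ring.sum_range_neg_one_pow_mul_choose_mul_choose_sub, mul_sum]
  refine sum_congr rfl fun q _ ↦ ?_
  rw [Nat.add_sub_cancel_left, hn1, pow_add, Nat.cast_add,
    show k - (j + q : ℤ) + 1 = k - j + 1 - q by ring]
  ring
end

section
/- Let A be a commutative ring, and let Δ_1, ..., Δ_n and an element α of an A-module be such that e_p(Δ_1, ..., Δ_n) α = 0 for all p ≥ 1, where the Δ_i are pairwise commuting module endomorphisms. Fix r with 1 ≤ r ≤ n and set α_i = e_i(Δ_1, ..., Δ̂_r, ..., Δ_n) α. Then Δ_r α_{i-1} = -α_i for all i ≥ 1, and consequently Δ_r^i α = (-1)^i α_i for all i ≥ 0. -/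
open Finset

/-- The `i`-th elementary symmetric polynomial evaluated at a pairwise
commuting family `f` of elements of a (not necessarily commutative)
semiring: the sum over all `i`-element subsets of `s` of the product of the
corresponding elements. -/
def esymmNC {ι R : Type*} [DecidableEq ι] [Semiring R]
    (s : Finset ι) (i : ℕ) (f : ι → R) (h : ∀ a b, Commute (f a) (f b)) : R :=
  ∑ t ∈ s.powersetCard i, t.noncommProd f (fun a _ b _ _ => h a b)

/-! Adding `Δ_r` to the family gives `e_{p+1}(Δ) = e_{p+1}(Δ̂_r) + Δ_r e_p(Δ̂_r)`; applied to `α`,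
the left side vanishes, which is the first claim. Iterating it gives the second. -/

section esymmNC

variable {ι R : Type*} [DecidableEq ι] [Semiring R] (f : ι → R) (h : ∀ a b, Commute (f a) (f b))

theorem esymmNC_zero (s : Finset ι) : esymmNC s 0 f h = 1 := by
  rw [esymmNC, powersetCard_zero, sum_singleton]
  exact noncommProd_empty f _

theorem esymmNC_insert_succ {s : Finset ι} {x : ι} (hx : x ∉ s) (p : ℕ) :
    esymmNC (insert x s) (p + 1) f h = esymmNC s (p + 1) f h + f x * esymmNC s p f h := by
  have hx_notMem {t : Finset ι} (ht : t ∈ s.powersetCard p) : x ∉ t :=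
    fun hxt => hx ((mem_powersetCard.1 ht).1 hxt)
  unfold esymmNC
  rw [powersetCard_succ_insert hx, sum_union, sum_image, mul_sum]
  · exact congrArg _ <| sum_congr rfl fun t ht => noncommProd_insert_of_notMem _ _ _ _ (hx_notMem ht)
  · intro a ha b hb hab
    simpa [erase_insert (hx_notMem ha), erase_insert (hx_notMem hb)] using congrArg (erase · x) hab
  · refine disjoint_right.2 fun t ht ht' => ?_
    obtain ⟨u, -, rfl⟩ := mem_image.1 ht
    exact hx ((mem_powersetCard.1 ht').1 (mem_insert_self x u))

theorem esymmNC_succ_eq_add_mul_erase [Fintype ι] (r : ι) (p : ℕ) :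
    esymmNC univ (p + 1) f h =
      esymmNC (univ.erase r) (p + 1) f h + f r * esymmNC (univ.erase r) p f h := by
  rw [← esymmNC_insert_succ f h (notMem_erase r univ), insert_erase (mem_univ r)]

end esymmNC

theorem Module.End.pow_apply_eq_neg_one_pow_smul {A M : Type*} [Semiring A] [AddCommGroup M]
    [Module A M] (T : Module.End A M) (a : ℕ → M) (hT : ∀ i, T (a i) = -a (i + 1)) (i : ℕ) :
    (T ^ i) (a 0) = ((-1 : ℤ) ^ i) • a i := by
  induction i with
  | zero => simp
  | succ i ih => rw [pow_succ', Module.End.mul_apply, ih, map_zsmul, hT, pow_succ, mul_neg_one,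
      neg_smul, smul_neg]

/-- let `Δ_1,…,Δ_n` be pairwise commuting endomorphisms of a
module over a commutative ring `A` and `α` an element annihilated by
`e_p(Δ_1,…,Δ_n)` for all `p ≥ 1`.  Fix `r` and set
`α_i = e_i(Δ_1,…,Δ̂_r,…,Δ_n) α`.  Then `Δ_r α_{i-1} = -α_i` for `i ≥ 1`, and
`Δ_r^i α = (-1)^i α_i` for all `i ≥ 0`. -/
theorem stmt6 {A M : Type*} [CommRing A] [AddCommGroup M] [Module A M]
    (n : ℕ) (Δ : Fin n → Module.End A M) (hcomm : ∀ a b, Commute (Δ a) (Δ b))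
    (α : M) (h0 : ∀ p : ℕ, 1 ≤ p → (esymmNC Finset.univ p Δ hcomm) α = 0)
    (r : Fin n) (αf : ℕ → M)
    (hαf : ∀ i : ℕ, αf i = (esymmNC (Finset.univ.erase r) i Δ
      (fun a b => hcomm a b)) α) :
    (∀ i : ℕ, 1 ≤ i → (Δ r) (αf (i - 1)) = -αf i) ∧
    (∀ i : ℕ, ((Δ r) ^ i) α = ((-1 : ℤ) ^ i) • αf i) := by
  have step (p : ℕ) : Δ r (αf p) = -αf (p + 1) := by
    have hp := h0 (p + 1) p.succ_pos
    rw [esymmNC_succ_eq_add_mul_erase Δ hcomm r, LinearMap.add_apply, Module.End.mul_apply,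
      ← hαf, ← hαf] at hp
    exact eq_neg_of_add_eq_zero_right hp
  have hα : αf 0 = α := by rw [hαf, esymmNC_zero, Module.End.one_apply]
  refine ⟨fun i hi => ?_, fun i => hα ▸ (Δ r).pow_apply_eq_neg_one_pow_smul αf step i⟩
  obtain ⟨p, rfl⟩ := Nat.exists_eq_add_of_le' hi
  exact step p
end

section
/- For natural numbers n ≥ 1 and 1 ≤ k ≤ n, define A_{n,k} = C(n+k-2, k-1) · (2n-k-1)!/(n-k)! · ∏_{j=0}^{n-2} (3j+1)!/(n+j)!. Then ∑_{k=1}^{n} A_{n,k} = ∏_{j=0}^{n-1} (3j+1)!/(n+j)!. -/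
/-!
Put `n = m + 1` and `k = i + 1`. The factor `∏_{j<m} (3j+1)!/(m+1+j)!` is common to all terms, and
the remaining sum is `m! ∑_{i+j=m} C(m+i,i) C(m+j,j) = m! C(3m+1,m) = (3m+1)!/(2m+1)!`, which is the
`j = m` factor of the product on the right. The convolution of the `C(a+i,i)` is Chu–Vandermonde at
negative upper arguments, since `C(-(a+1), i) = (-1)^i C(a+i, i)`.
-/

open Finset
open scoped Nat

theorem Ring.choose_neg_natCast_succ (a i : ℕ) :
    Ring.choose (-((a + 1 : ℕ) : ℤ)) i = (-1) ^ i * (a + i).choose i := by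
  rw [Ring.choose_neg, Int.negOnePow_def, Units.smul_def]
  push_cast
  rw [show ((a : ℤ) + 1 + i - 1) = ((a + i : ℕ) : ℤ) by push_cast; ring, Ring.choose_natCast]
  simp

theorem Nat.sum_antidiagonal_add_choose_mul_add_choose (a b m : ℕ) :
    ∑ ij ∈ antidiagonal m, (a + ij.1).choose ij.1 * (b + ij.2).choose ij.2 =
      (a + b + m + 1).choose m := by
  have h := Ring.add_choose_eq (r := -((a + 1 : ℕ) : ℤ)) (s := -((b + 1 : ℕ) : ℤ)) m
    (Commute.all _ _)
  rw [← neg_add, ← Nat.cast_add, show a + 1 + (b + 1) = a + b + 1 + 1 by ring,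
    Ring.choose_neg_natCast_succ, add_right_comm] at h
  simp_rw [Ring.choose_neg_natCast_succ] at h
  have hsign : ∀ ij ∈ antidiagonal m, ((-1 : ℤ) ^ ij.1 * ((a + ij.1).choose ij.1 : ℤ)) *
      ((-1) ^ ij.2 * ((b + ij.2).choose ij.2 : ℤ)) =
      (-1) ^ m * (((a + ij.1).choose ij.1 * (b + ij.2).choose ij.2 : ℕ) : ℤ) := by
    intro ij hij
    rw [← mem_antidiagonal.mp hij, pow_add]
    push_cast; ring
  rw [sum_congr rfl hsign, ← mul_sum] at h
  exact_mod_cast (mul_left_cancel₀ (pow_ne_zero m (by norm_num)) h).symm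

theorem sum_range_choose_mul_factorial_div_factorial (m : ℕ) :
    ∑ i ∈ range (m + 1), ((m + i).choose i : ℚ) * (2 * m - i)! / (m - i)! =
      (3 * m + 1)! / (2 * m + 1)! := by
  have hterm (i : ℕ) (hi : i ≤ m) : ((m + i).choose i : ℚ) * (2 * m - i)! / (m - i)! =
      m ! * (((m + i).choose i * (m + (m - i)).choose (m - i) : ℕ) : ℚ) := by
    rw [show 2 * m - i = m + (m - i) by omega, Nat.cast_mul,
      ← Nat.choose_symm_add (a := m) (b := m - i), Nat.cast_add_choose]
    field_simp
  calc ∑ i ∈ range (m + 1), ((m + i).choose i : ℚ) * (2 * m - i)! / (m - i)!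
      = m ! * ∑ ij ∈ antidiagonal m,
          (((m + ij.1).choose ij.1 * (m + ij.2).choose ij.2 : ℕ) : ℚ) := by
        rw [Nat.sum_antidiagonal_eq_sum_range_succ_mk, mul_sum]
        exact sum_congr rfl fun i hi => hterm i (Nat.lt_succ_iff.mp (mem_range.mp hi))
    _ = m ! * (3 * m + 1).choose m := by
        rw [← Nat.cast_sum, Nat.sum_antidiagonal_add_choose_mul_add_choose,
          show m + m + m + 1 = 3 * m + 1 by ring]
    _ = (3 * m + 1)! / (2 * m + 1)! := by
        rw [Nat.cast_choose ℚ (by omega : m ≤ 3 * m + 1), show 3 * m + 1 - m = 2 * m + 1 by omega]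
        field_simp

/-- the refined ASM numbers
`A_{n,k} = C(n+k-2, k-1) · (2n-k-1)!/(n-k)! · ∏_{j=0}^{n-2} (3j+1)!/(n+j)!`
sum (over `1 ≤ k ≤ n`) to the total ASM number `∏_{j=0}^{n-1} (3j+1)!/(n+j)!`. -/
theorem stmt13 (n : ℕ) (hn : 1 ≤ n) :
    ∑ k ∈ Finset.Icc 1 n,
      ((Nat.choose (n + k - 2) (k - 1) : ℚ) * (Nat.factorial (2 * n - k - 1) : ℚ)
          / (Nat.factorial (n - k) : ℚ)
        * ∏ j ∈ Finset.range (n - 1),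
            (Nat.factorial (3 * j + 1) : ℚ) / (Nat.factorial (n + j) : ℚ))
    = ∏ j ∈ Finset.range n,
        (Nat.factorial (3 * j + 1) : ℚ) / (Nat.factorial (n + j) : ℚ) := by
  obtain ⟨m, rfl⟩ : ∃ m, n = m + 1 := ⟨n - 1, by omega⟩
  have hshift : ∀ i ∈ range (m + 1),
      ((m + 1 + (1 + i) - 2).choose (1 + i - 1) : ℚ) * (2 * (m + 1) - (1 + i) - 1)!
        / (m + 1 - (1 + i))! = ((m + i).choose i : ℚ) * (2 * m - i)! / (m - i)! := by
    intro i _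
    rw [show m + 1 + (1 + i) - 2 = m + i by omega, show 1 + i - 1 = i by omega,
      show 2 * (m + 1) - (1 + i) - 1 = 2 * m - i by omega, show m + 1 - (1 + i) = m - i by omega]
  rw [← Ico_add_one_right_eq_Icc, sum_Ico_eq_sum_range, ← sum_mul, add_tsub_cancel_right,
    add_tsub_cancel_right, sum_congr rfl hshift, sum_range_choose_mul_factorial_div_factorial,
    prod_range_succ, show m + 1 + m = 2 * m + 1 by ring, mul_comm]
end
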